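/- Sign of the excited energy: fix ω > 0 and consider the N-body problem with center of mass zero. Then: (1) if α > 2, the excited energy E*(ω) = inf{E_ω(x) : K_ω(x) = 0} is strictly positive, and the infimum of −U(x) over {K_ω(x) = 0} is attained and strictly positive; (2) if α = 2, E*(ω) = 0; (3) if 0 < α < 2 and N ≥ 3, then E*(ω) = −∞, i.e., the quantity E_ω(x) = −(α/2 − 1) U(x) is unbounded below on the constraint set {K_ω(x) = 0}. -/

import Mathlib

/- STATEMENT 9: sign of the excited energy E*(ω): strictly positive for α > 2 (with the
infimum of −U over the constraint set attained and positive), zero for α = 2, and −∞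
(unbounded below) for 0 < α < 2 and N ≥ 3. -/

namespace NBodyPaper

open Real

noncomputable section

abbrev E3 := EuclideanSpace ℝ (Fin 3)

variable {N : ℕ}

/-- The α-homogeneous potential `U(x) = -∑_{i<j} m_i m_j / |x_i - x_j|^α`. -/
def pot (α : ℝ) (m : Fin N → ℝ) (q : Fin N → E3) : ℝ :=
  -∑ i : Fin N, ∑ j ∈ Finset.univ.filter (fun j => i < j), m i * m j / ‖q i - q j‖ ^ α

/-- Moment of inertia `I(x) = ∑ m_i |x_i|²`. -/
def inertia (m : Fin N → ℝ) (q : Fin N → E3) : ℝ := ∑ i, m i * ‖q i‖ ^ 2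

/-- Collision-free configuration. -/
def OffDiag (q : Fin N → E3) : Prop := ∀ i j, i ≠ j → q i ≠ q j

/-- Center of mass at the origin. -/
def comZero (m : Fin N → ℝ) (q : Fin N → E3) : Prop := ∑ i, m i • q i = 0

/-- The threshold function `K_ω(x) = ω² I(x) + α U(x)`. -/
def Kfun (α : ℝ) (m : Fin N → ℝ) (ω : ℝ) (q : Fin N → E3) : ℝ :=
  ω ^ 2 * inertia m q + α * pot α m q

/-- `E_ω(x) = (ω²/2) I(x) + U(x)`. -/
def Eomega (α : ℝ) (m : Fin N → ℝ) (ω : ℝ) (q : Fin N → E3) : ℝ :=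
  ω ^ 2 / 2 * inertia m q + pot α m q

/-- The excited energy `E*(ω) = inf { E_ω(x) : K_ω(x) = 0 }`, the infimum taken over
collision-free configurations with center of mass zero. -/
def Estar (α : ℝ) (m : Fin N → ℝ) (ω : ℝ) : ℝ :=
  sInf {e : ℝ | ∃ q : Fin N → E3, OffDiag q ∧ comZero m q ∧ Kfun α m ω q = 0 ∧ e = Eomega α m ω q}

variable {α : ℝ} {m : Fin N → ℝ} {q : Fin N → E3} {ω c : ℝ}

lemma negpot_eq : -pot α m q = ∑ i : Fin N,
    ∑ j ∈ Finset.univ.filter (fun j => i < j), m i * m j / ‖q i - q j‖ ^ α := by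
  simp [pot]

lemma term_nonneg (hm : ∀ i, 0 < m i) (i j : Fin N) :
    0 ≤ m i * m j / ‖q i - q j‖ ^ α :=
  div_nonneg (mul_nonneg (hm i).le (hm j).le) (Real.rpow_nonneg (norm_nonneg _) _)

lemma negpot_nonneg (hm : ∀ i, 0 < m i) : 0 ≤ -pot α m q := by
  rw [negpot_eq]
  exact Finset.sum_nonneg fun i _ => Finset.sum_nonneg fun j _ => term_nonneg hm i j

lemma single_le_negpot (hm : ∀ i, 0 < m i) {i j : Fin N} (hij : i < j) :
    m i * m j / ‖q i - q j‖ ^ α ≤ -pot α m q := by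
  rw [negpot_eq]
  calc m i * m j / ‖q i - q j‖ ^ α
      ≤ ∑ j' ∈ Finset.univ.filter (fun j' => i < j'), m i * m j' / ‖q i - q j'‖ ^ α := by
        exact Finset.single_le_sum
          (f := fun k => m i * m k / ‖q i - q k‖ ^ α)
          (fun k _ => term_nonneg hm i k) (by simp [Finset.mem_filter, hij])
    _ ≤ _ := Finset.single_le_sum
        (f := fun k => ∑ j' ∈ Finset.univ.filter (fun j' => k < j'),
          m k * m j' / ‖q k - q j'‖ ^ α)
        (fun k _ => Finset.sum_nonneg fun j' _ => term_nonneg hm k j') (Finset.mem_univ i)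

lemma single_le_negpot' (hm : ∀ i, 0 < m i) {i j : Fin N} (hij : i ≠ j) :
    m i * m j / ‖q i - q j‖ ^ α ≤ -pot α m q := by
  rcases hij.lt_or_gt with h | h
  · exact single_le_negpot hm h
  · rw [mul_comm (m i), norm_sub_rev]
    exact single_le_negpot hm h

lemma negpot_pos (hm : ∀ i, 0 < m i) (hN : 2 ≤ N) (hod : OffDiag q) :
    0 < -pot α m q := by
  have h0 : (0 : ℕ) < N := by omega
  have h1 : (1 : ℕ) < N := by omega
  set i : Fin N := ⟨0, h0⟩
  set j : Fin N := ⟨1, h1⟩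
  have hij : i ≠ j := by simp [i, j, Fin.ext_iff]
  have hq : q i ≠ q j := hod i j hij
  have hr : 0 < ‖q i - q j‖ := by
    rw [norm_pos_iff]; exact sub_ne_zero.mpr hq
  have : 0 < m i * m j / ‖q i - q j‖ ^ α :=
    div_pos (mul_pos (hm i) (hm j)) (Real.rpow_pos_of_pos hr α)
  exact lt_of_lt_of_le this (single_le_negpot' hm hij)

lemma inertia_nonneg (hm : ∀ i, 0 < m i) : 0 ≤ inertia m q :=
  Finset.sum_nonneg fun i _ => mul_nonneg (hm i).le (sq_nonneg _)

lemma single_le_inertia (hm : ∀ i, 0 < m i) (k : Fin N) :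
    m k * ‖q k‖ ^ 2 ≤ inertia m q :=
  Finset.single_le_sum (f := fun i => m i * ‖q i‖ ^ 2)
    (fun i _ => mul_nonneg (hm i).le (sq_nonneg _)) (Finset.mem_univ k)

lemma inertia_pos (hm : ∀ i, 0 < m i) (hN : 2 ≤ N) (hod : OffDiag q) :
    0 < inertia m q := by
  have h0 : (0 : ℕ) < N := by omega
  have h1 : (1 : ℕ) < N := by omega
  set i : Fin N := ⟨0, h0⟩
  set j : Fin N := ⟨1, h1⟩
  have hij : i ≠ j := by simp [i, j, Fin.ext_iff]
  have : q i ≠ 0 ∨ q j ≠ 0 := by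
    by_contra h
    push_neg at h
    exact hod i j hij (by rw [h.1, h.2])
  rcases this with h | h
  · exact lt_of_lt_of_le (mul_pos (hm i) (pow_pos (norm_pos_iff.mpr h) 2))
      (single_le_inertia hm i)
  · exact lt_of_lt_of_le (mul_pos (hm j) (pow_pos (norm_pos_iff.mpr h) 2))
      (single_le_inertia hm j)

lemma inertia_smul : inertia m (fun i => c • q i) = c ^ 2 * inertia m q := by
  unfold inertia
  rw [Finset.mul_sum]
  refine Finset.sum_congr rfl fun i _ => ?_
  rw [norm_smul, Real.norm_eq_abs, mul_pow, sq_abs]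
  ring

lemma pot_smul (hc : 0 < c) : pot α m (fun i => c • q i) = pot α m q / c ^ α := by
  unfold pot
  rw [neg_div, neg_inj, Finset.sum_div]
  refine Finset.sum_congr rfl fun i _ => ?_
  rw [Finset.sum_div]
  refine Finset.sum_congr rfl fun j _ => ?_
  rw [← smul_sub, norm_smul, Real.norm_eq_abs, abs_of_pos hc,
    Real.mul_rpow hc.le (norm_nonneg _), div_div, mul_comm (c ^ α), ← div_div]

lemma comZero_smul (h : comZero m q) : comZero m (fun i => c • q i) := by
  unfold comZero at *
  simp_rw [smul_comm _ c, ← Finset.smul_sum, h, smul_zero]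

lemma offDiag_smul (hc : c ≠ 0) (hod : OffDiag q) : OffDiag (fun i => c • q i) := by
  intro i j hij h
  exact hod i j hij (smul_right_injective _ hc h)

lemma Eomega_of_K (hK : Kfun α m ω q = 0) :
    Eomega α m ω q = (1 - α / 2) * pot α m q := by
  unfold Kfun at hK
  unfold Eomega
  linear_combination hK / 2
lemma line_config (hm : ∀ i, 0 < m i) (hN : 1 ≤ N) (y : Fin N → ℝ)
    (hy : Function.Injective y) :
    ∃ q : Fin N → E3, OffDiag q ∧ comZero m q ∧ ∀ i j, ‖q i - q j‖ = |y i - y j| := by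
  have hNe : (Finset.univ : Finset (Fin N)).Nonempty := by
    refine ⟨⟨0, by omega⟩, Finset.mem_univ _⟩
  have hM : 0 < ∑ i, m i := Finset.sum_pos (fun i _ => hm i) hNe
  set M : ℝ := ∑ i, m i with hMdef
  set μ : ℝ := (∑ i, m i * y i) / M with hμ
  set e : E3 := EuclideanSpace.single (0 : Fin 3) (1 : ℝ) with he
  have hne : ‖e‖ = 1 := by rw [he, EuclideanSpace.norm_single]; simp
  refine ⟨fun i => (y i - μ) • e, ?_, ?_, ?_⟩
  · intro i j hij h
    apply hy.ne hij
    have := congrArg (fun v : E3 => ‖v - (y j - μ) • e‖) h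
    simp only [sub_self, norm_zero] at this
    rw [← sub_smul, norm_smul, hne, mul_one, Real.norm_eq_abs] at this
    have : y i - μ - (y j - μ) = 0 := abs_eq_zero.mp this
    linarith
  · unfold comZero
    have : ∑ i, m i • ((y i - μ) • e) = (∑ i, m i * (y i - μ)) • e := by
      rw [Finset.sum_smul]
      exact Finset.sum_congr rfl fun i _ => by rw [smul_smul]
    rw [this]
    have : (∑ i, m i * (y i - μ)) = 0 := by
      have : ∑ i, m i * (y i - μ) = (∑ i, m i * y i) - μ * M := by
        rw [Finset.mul_sum, ← Finset.sum_sub_distrib]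
        exact Finset.sum_congr rfl fun i _ => by ring
      rw [this, hμ, div_mul_cancel₀ _ hM.ne']
      ring
    rw [this, zero_smul]
  · intro i j
    rw [← sub_smul, norm_smul, hne, mul_one, Real.norm_eq_abs]
    congr 1
    ring

lemma normalize (hm : ∀ i, 0 < m i) (hN : 2 ≤ N) (hod : OffDiag q)
    (hcom : comZero m q) :
    ∃ r : Fin N → E3, OffDiag r ∧ comZero m r ∧ inertia m r = 1 ∧
      -pot α m r = (-pot α m q) * (inertia m q) ^ (α / 2) := by
  have hI : 0 < inertia m q := inertia_pos hm hN hod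
  set c : ℝ := (inertia m q) ^ (-(1/2) : ℝ) with hc
  have hcpos : 0 < c := Real.rpow_pos_of_pos hI _
  refine ⟨fun i => c • q i, offDiag_smul hcpos.ne' hod, comZero_smul hcom, ?_, ?_⟩
  · rw [inertia_smul]
    have : c ^ 2 = (inertia m q)⁻¹ := by
      rw [hc, ← Real.rpow_natCast ((inertia m q) ^ (-(1/2) : ℝ)) 2,
        ← Real.rpow_mul hI.le]
      norm_num
      exact Real.rpow_neg_one _
    rw [this, inv_mul_cancel₀ hI.ne']
  · rw [pot_smul hcpos, ← neg_div]
    have : c ^ α = ((inertia m q) ^ (α / 2))⁻¹ := by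
      rw [hc, ← Real.rpow_mul hI.le, ← Real.rpow_neg hI.le]
      ring_nf
    rw [this, div_inv_eq_mul]
lemma constraint_val (hα : 0 < α) (hm : ∀ i, 0 < m i) (hN : 2 ≤ N)
    (hod : OffDiag q) (hK : Kfun α m ω q = 0) :
    (-pot α m q) ^ ((2 + α) / 2) =
      ((-pot α m q) * (inertia m q) ^ (α / 2)) * (ω ^ 2 / α) ^ (α / 2) := by
  have hu : 0 < -pot α m q := negpot_pos hm hN hod
  have hI : 0 ≤ inertia m q := inertia_nonneg hm
  have hKe : -pot α m q = inertia m q * (ω ^ 2 / α) := by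
    unfold Kfun at hK
    field_simp
    linarith
  have heq : ((2 + α) / 2 : ℝ) = 1 + α / 2 := by ring
  rw [heq, Real.rpow_add hu, Real.rpow_one]
  have h2 : (-pot α m q) ^ (α / 2) =
      (inertia m q) ^ (α / 2) * (ω ^ 2 / α) ^ (α / 2) := by
    rw [hKe, Real.mul_rpow hI (div_nonneg (sq_nonneg ω) hα.le)]
  rw [h2]
  ring

lemma toConstraint (hα : 0 < α) (hω : 0 < ω) (hm : ∀ i, 0 < m i) (hN : 2 ≤ N)
    (hod : OffDiag q) (hcom : comZero m q) :
    ∃ p : Fin N → E3, OffDiag p ∧ comZero m p ∧ Kfun α m ω p = 0 ∧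
      (-pot α m p) ^ ((2 + α) / 2) =
        ((-pot α m q) * (inertia m q) ^ (α / 2)) * (ω ^ 2 / α) ^ (α / 2) := by
  have hu : 0 < -pot α m q := negpot_pos hm hN hod
  have hI : 0 < inertia m q := inertia_pos hm hN hod
  set u : ℝ := -pot α m q with hudef
  set I : ℝ := inertia m q with hIdef
  have hx : 0 < α * u / (ω ^ 2 * I) := by positivity
  set x : ℝ := α * u / (ω ^ 2 * I) with hxdef
  set lam : ℝ := x ^ ((2 + α)⁻¹) with hlamdef
  have hlam : 0 < lam := Real.rpow_pos_of_pos hx _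
  have h2a : (2 : ℝ) + α ≠ 0 := by linarith
  have hne : lam ^ α ≠ 0 := (Real.rpow_pos_of_pos hlam α).ne'
  have hlam2a : lam ^ (2 : ℕ) * lam ^ α = x := by
    rw [← Real.rpow_natCast lam 2, ← Real.rpow_add hlam]
    push_cast
    rw [hlamdef, ← Real.rpow_mul hx.le, inv_mul_cancel₀ h2a, Real.rpow_one]
  have hxx : ω ^ 2 * I * x = α * u := by
    rw [hxdef]
    field_simp
  have hpotq : pot α m q = -u := by rw [hudef, neg_neg]
  set p : Fin N → E3 := fun i => lam • q i with hpdef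
  have hodp : OffDiag p := offDiag_smul hlam.ne' hod
  have hKp : Kfun α m ω p = 0 := by
    unfold Kfun
    rw [hpdef, inertia_smul, pot_smul hlam, hpotq, ← hIdef]
    have hsplit : α * (-u / lam ^ α) = -(α * u / lam ^ α) := by ring
    rw [hsplit]
    rw [add_neg_eq_zero, eq_div_iff hne]
    calc ω ^ 2 * (lam ^ 2 * I) * lam ^ α = ω ^ 2 * I * (lam ^ (2 : ℕ) * lam ^ α) := by ring
      _ = ω ^ 2 * I * x := by rw [hlam2a]
      _ = α * u := hxx
  refine ⟨p, hodp, comZero_smul hcom, hKp, ?_⟩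
  have hval := constraint_val hα hm hN hodp hKp
  suffices hW : (-pot α m p) * (inertia m p) ^ (α / 2) = u * I ^ (α / 2) by
    rw [hval, hW]
  rw [hpdef, inertia_smul, pot_smul hlam, hpotq, ← hIdef]
  have hnn : -(-u / lam ^ α) = u / lam ^ α := by ring
  have hl2 : ((lam ^ (2 : ℕ) : ℝ)) ^ (α / 2) = lam ^ α := by
    rw [← Real.rpow_natCast lam 2, ← Real.rpow_mul hlam.le,
      show ((2 : ℕ) : ℝ) * (α / 2) = α by push_cast; ring]
  rw [hnn, Real.mul_rpow (by positivity) hI.le, hl2]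
  field_simp
lemma sphere_min (hα : 0 < α) (hm : ∀ i, 0 < m i) (hN : 2 ≤ N) :
    ∃ qs : Fin N → E3, comZero m qs ∧ inertia m qs = 1 ∧ OffDiag qs ∧
      ∀ q : Fin N → E3, comZero m q → inertia m q = 1 → OffDiag q →
        -pot α m qs ≤ -pot α m q := by
  classical
  -- base configuration on the unit "sphere"
  obtain ⟨q0, hod0, hcom0, -⟩ := line_config (m := m) hm (by omega) (fun i => (i : ℝ))
    (fun i j h => Fin.val_injective (Nat.cast_injective h))
  obtain ⟨q1, hod1, hcom1, hI1, -⟩ := normalize (α := α) hm hN hod0 hcom0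
  set c0 : ℝ := -pot α m q1 with hc0def
  have hc0 : 0 < c0 := negpot_pos hm hN hod1
  -- minimal mass
  have hune : (Finset.univ : Finset (Fin N)).Nonempty := ⟨⟨0, by omega⟩, Finset.mem_univ _⟩
  set mlow : ℝ := Finset.univ.inf' hune m with hmlowdef
  have hmlow : 0 < mlow := (Finset.lt_inf'_iff hune).mpr fun i _ => hm i
  have hmlow_le : ∀ i, mlow ≤ m i := fun i => Finset.inf'_le m (Finset.mem_univ i)
  -- minimal distance of q1
  set P : Finset (Fin N × Fin N) :=
    Finset.univ.filter (fun p : Fin N × Fin N => p.1 ≠ p.2) with hPdef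
  have hP : P.Nonempty := by
    refine ⟨⟨⟨0, by omega⟩, ⟨1, by omega⟩⟩, Finset.mem_filter.mpr ⟨Finset.mem_univ _, ?_⟩⟩
    simp [Fin.ext_iff]
  set δ₁ : ℝ := P.inf' hP (fun p => ‖q1 p.1 - q1 p.2‖) with hδ₁def
  have hδ₁ : 0 < δ₁ := by
    rw [hδ₁def, Finset.lt_inf'_iff]
    intro p hp
    have hne : p.1 ≠ p.2 := (Finset.mem_filter.mp hp).2
    exact norm_pos_iff.mpr (sub_ne_zero.mpr (hod1 p.1 p.2 hne))
  set β : ℝ := (mlow ^ 2 / c0) ^ (α⁻¹) with hβdef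
  have hβ : 0 < β := Real.rpow_pos_of_pos (by positivity) _
  set δ : ℝ := min δ₁ β with hδdef
  have hδ : 0 < δ := lt_min hδ₁ hβ
  have hδα : δ ^ α ≤ mlow ^ 2 / c0 := by
    calc δ ^ α ≤ β ^ α :=
          Real.rpow_le_rpow hδ.le (min_le_right _ _) hα.le
      _ = mlow ^ 2 / c0 := by
          rw [hβdef, ← Real.rpow_mul (by positivity), inv_mul_cancel₀ hα.ne', Real.rpow_one]
  have hδαpos : 0 < δ ^ α := Real.rpow_pos_of_pos hδ _
  -- the compact set T
  set T : Set (Fin N → E3) :=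
    {q | comZero m q ∧ inertia m q = 1 ∧ ∀ i j, i ≠ j → δ ≤ ‖q i - q j‖} with hTdef
  have hq1T : q1 ∈ T := by
    refine ⟨hcom1, hI1, fun i j hij => ?_⟩
    calc δ ≤ δ₁ := min_le_left _ _
      _ ≤ ‖q1 i - q1 j‖ :=
          Finset.inf'_le _ (Finset.mem_filter.mpr ⟨Finset.mem_univ (⟨i, j⟩ : Fin N × Fin N), hij⟩)
  have hclosed : IsClosed T := by
    have hA : IsClosed {q : Fin N → E3 | comZero m q} := by
      have : Continuous fun q : Fin N → E3 => ∑ i, m i • q i :=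
        continuous_finset_sum _ fun i _ => (continuous_apply i).const_smul (m i)
      exact isClosed_eq this continuous_const
    have hB : IsClosed {q : Fin N → E3 | inertia m q = 1} := by
      have : Continuous fun q : Fin N → E3 => inertia m q :=
        continuous_finset_sum _ fun i _ => continuous_const.mul ((continuous_apply i).norm.pow 2)
      exact isClosed_eq this continuous_const
    have hC : IsClosed {q : Fin N → E3 | ∀ i j, i ≠ j → δ ≤ ‖q i - q j‖} := by
      have : {q : Fin N → E3 | ∀ i j, i ≠ j → δ ≤ ‖q i - q j‖} =
          ⋂ i, ⋂ j, {q : Fin N → E3 | i ≠ j → δ ≤ ‖q i - q j‖} := by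
        ext q; simp
      rw [this]
      refine isClosed_iInter fun i => isClosed_iInter fun j => ?_
      by_cases hij : i = j
      · simp [hij]
      · have : {q : Fin N → E3 | i ≠ j → δ ≤ ‖q i - q j‖} =
            {q : Fin N → E3 | δ ≤ ‖q i - q j‖} := by
          ext q; simp [hij]
        rw [this]
        exact isClosed_le continuous_const ((continuous_apply i).sub (continuous_apply j)).norm
    have : T = {q : Fin N → E3 | comZero m q} ∩ ({q : Fin N → E3 | inertia m q = 1} ∩
        {q : Fin N → E3 | ∀ i j, i ≠ j → δ ≤ ‖q i - q j‖}) := by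
      ext q; simp [hTdef, Set.mem_setOf_eq, and_assoc]
    rw [this]
    exact hA.inter (hB.inter hC)
  have hsub : T ⊆ Metric.closedBall 0 (Real.sqrt mlow⁻¹) := by
    intro q hq
    rw [Metric.mem_closedBall, dist_zero_right]
    rw [pi_norm_le_iff_of_nonneg (Real.sqrt_nonneg _)]
    intro i
    have h1 : mlow * ‖q i‖ ^ 2 ≤ 1 := by
      calc mlow * ‖q i‖ ^ 2 ≤ m i * ‖q i‖ ^ 2 :=
            mul_le_mul_of_nonneg_right (hmlow_le i) (sq_nonneg _)
        _ ≤ inertia m q := single_le_inertia hm i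
        _ = 1 := hq.2.1
    have h2 : ‖q i‖ ^ 2 ≤ mlow⁻¹ := by
      rw [inv_eq_one_div, le_div_iff₀ hmlow, mul_comm]
      exact h1
    calc ‖q i‖ = Real.sqrt (‖q i‖ ^ 2) := (Real.sqrt_sq (norm_nonneg _)).symm
      _ ≤ Real.sqrt mlow⁻¹ := Real.sqrt_le_sqrt h2
  have hcomp : IsCompact T :=
    (isCompact_closedBall (0 : Fin N → E3) _).of_isClosed_subset hclosed hsub
  -- continuity of -pot on T
  set F : (Fin N → E3) → ℝ := fun q => ∑ i : Fin N,
    ∑ j ∈ Finset.univ.filter (fun j => i < j), m i * m j / ‖q i - q j‖ ^ α with hFdef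
  have hF : ∀ q : Fin N → E3, -pot α m q = F q := fun q => negpot_eq
  have hcont : ContinuousOn F T := by
    refine continuousOn_finset_sum _ fun i _ => continuousOn_finset_sum _ fun j hj => ?_
    have hij : i ≠ j := ne_of_lt (Finset.mem_filter.mp hj).2
    refine ContinuousOn.div continuousOn_const ?_ ?_
    · exact (Continuous.rpow_const ((continuous_apply i).sub (continuous_apply j)).norm
        (fun _ => Or.inr hα.le)).continuousOn
    · intro q hq
      have : δ ≤ ‖q i - q j‖ := hq.2.2 i j hij
      exact (Real.rpow_pos_of_pos (lt_of_lt_of_le hδ this) α).ne'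
  obtain ⟨qs, hqsT, hminT⟩ := hcomp.exists_isMinOn ⟨q1, hq1T⟩ hcont
  have hodqs : OffDiag qs := by
    intro i j hij h
    have := hqsT.2.2 i j hij
    rw [h, sub_self, norm_zero] at this
    linarith
  refine ⟨qs, hqsT.1, hqsT.2.1, hodqs, ?_⟩
  intro q hcom hI hod
  by_cases hqT : q ∈ T
  · rw [hF qs, hF q]
    exact hminT hqT
  · -- some pair is closer than δ, so -pot q is big
    have : ∃ i j, i ≠ j ∧ ‖q i - q j‖ < δ := by
      by_contra h
      push_neg at h
      exact hqT ⟨hcom, hI, fun i j hij => (h i j hij)⟩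
    obtain ⟨i, j, hij, hrδ⟩ := this
    have hr0 : 0 < ‖q i - q j‖ := norm_pos_iff.mpr (sub_ne_zero.mpr (hod i j hij))
    have hrα : ‖q i - q j‖ ^ α < δ ^ α := Real.rpow_lt_rpow hr0.le hrδ hα
    have hrαpos : 0 < ‖q i - q j‖ ^ α := Real.rpow_pos_of_pos hr0 _
    have hmm : mlow ^ 2 ≤ m i * m j := by
      have := mul_le_mul (hmlow_le i) (hmlow_le j) hmlow.le (hm i).le
      calc mlow ^ 2 = mlow * mlow := sq mlow
        _ ≤ m i * m j := this
    have hchain : c0 < m i * m j / ‖q i - q j‖ ^ α := by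
      calc c0 ≤ mlow ^ 2 / δ ^ α := by
            rw [le_div_iff₀ hδαpos]
            calc c0 * δ ^ α ≤ c0 * (mlow ^ 2 / c0) :=
                  mul_le_mul_of_nonneg_left hδα hc0.le
              _ = mlow ^ 2 := by field_simp
        _ < mlow ^ 2 / ‖q i - q j‖ ^ α :=
            div_lt_div_of_pos_left (by positivity) hrαpos hrα
        _ ≤ m i * m j / ‖q i - q j‖ ^ α := by gcongr
    calc -pot α m qs ≤ c0 := by
          rw [hF qs, hc0def, hF q1]; exact hminT hq1T
      _ ≤ m i * m j / ‖q i - q j‖ ^ α := hchain.le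
      _ ≤ -pot α m q := single_le_negpot' hm hij

set_option maxHeartbeats 1000000 in
/-- **Sign of the excited energy.** -/
theorem excited_energy_sign {N : ℕ} (hN : 2 ≤ N) (m : Fin N → ℝ) (hm : ∀ i, 0 < m i)
    (ω : ℝ) (hω : 0 < ω) (α : ℝ) :
    (2 < α → 0 < Estar α m ω ∧
      ∃ q : Fin N → E3, OffDiag q ∧ comZero m q ∧ Kfun α m ω q = 0 ∧ 0 < -pot α m q ∧
        IsLeast {u : ℝ | ∃ p : Fin N → E3,
          OffDiag p ∧ comZero m p ∧ Kfun α m ω p = 0 ∧ u = -pot α m p} (-pot α m q)) ∧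
    (α = 2 → Estar α m ω = 0) ∧
    (0 < α → α < 2 → 3 ≤ N → ∀ c : ℝ,
      ∃ q : Fin N → E3, OffDiag q ∧ comZero m q ∧ Kfun α m ω q = 0 ∧ Eomega α m ω q < c) := by
  obtain ⟨q0, hod0, hcom0, -⟩ := line_config (m := m) hm (by omega) (fun i => (i : ℝ))
    (fun i j h => Fin.val_injective (Nat.cast_injective h))
  refine ⟨?_, ?_, ?_⟩
  · -- case 2 < α
    intro hα2
    have hα : 0 < α := by linarith
    have hepos : 0 < (2 + α) / 2 := by linarith
    obtain ⟨qs, hcoms, hIs, hods, hmin⟩ := sphere_min hα hm hN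
    obtain ⟨ps, hodps, hcomps, hKps, hvps⟩ := toConstraint hα hω hm hN hods hcoms
    rw [hIs, Real.one_rpow, mul_one] at hvps
    have hups : 0 < -pot α m ps := negpot_pos hm hN hodps
    have hlb : ∀ u ∈ {u : ℝ | ∃ p : Fin N → E3,
        OffDiag p ∧ comZero m p ∧ Kfun α m ω p = 0 ∧ u = -pot α m p},
        -pot α m ps ≤ u := by
      rintro u ⟨p, hodp, hcomp', hKp, rfl⟩
      have hup : 0 < -pot α m p := negpot_pos hm hN hodp
      obtain ⟨r, hodr, hcomr, hIr, hvr⟩ := normalize (α := α) hm hN hodp hcomp'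
      have h1 : -pot α m qs ≤ -pot α m r := hmin r hcomr hIr hodr
      have h2 := constraint_val hα hm hN hodp hKp
      have hkey : (-pot α m ps) ^ ((2 + α) / 2) ≤ (-pot α m p) ^ ((2 + α) / 2) := by
        rw [hvps, h2, ← hvr]
        exact mul_le_mul_of_nonneg_right h1
          (Real.rpow_nonneg (div_nonneg (sq_nonneg ω) hα.le) _)
      by_contra h
      push_neg at h
      have := Real.rpow_lt_rpow hup.le h hepos
      linarith
    have hle : IsLeast {u : ℝ | ∃ p : Fin N → E3,
        OffDiag p ∧ comZero m p ∧ Kfun α m ω p = 0 ∧ u = -pot α m p} (-pot α m ps) :=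
      ⟨⟨ps, hodps, hcomps, hKps, rfl⟩, hlb⟩
    refine ⟨?_, ps, hodps, hcomps, hKps, hups, hle⟩
    have he0 : 0 < (α / 2 - 1) * (-pot α m ps) := by
      apply mul_pos (by linarith) hups
    have hbelow : ∀ e ∈ {e : ℝ | ∃ q : Fin N → E3,
        OffDiag q ∧ comZero m q ∧ Kfun α m ω q = 0 ∧ e = Eomega α m ω q},
        (α / 2 - 1) * (-pot α m ps) ≤ e := by
      rintro e ⟨p, hodp, hcomp', hKp, rfl⟩
      rw [Eomega_of_K hKp]
      have h1 : -pot α m ps ≤ -pot α m p := hlb _ ⟨p, hodp, hcomp', hKp, rfl⟩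
      have h2 : (α / 2 - 1) * (-pot α m ps) ≤ (α / 2 - 1) * (-pot α m p) :=
        mul_le_mul_of_nonneg_left h1 (by linarith)
      calc (α / 2 - 1) * (-pot α m ps) ≤ (α / 2 - 1) * (-pot α m p) := h2
        _ = (1 - α / 2) * pot α m p := by ring
    have hne : {e : ℝ | ∃ q : Fin N → E3,
        OffDiag q ∧ comZero m q ∧ Kfun α m ω q = 0 ∧ e = Eomega α m ω q}.Nonempty :=
      ⟨Eomega α m ω ps, ps, hodps, hcomps, hKps, rfl⟩
    exact lt_of_lt_of_le he0 (le_csInf hne hbelow)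
  · -- case α = 2
    intro hα2
    subst hα2
    obtain ⟨p0, hodp0, hcomp0, hKp0, -⟩ :=
      toConstraint (α := 2) (by norm_num) hω hm hN hod0 hcom0
    have hset : {e : ℝ | ∃ q : Fin N → E3,
        OffDiag q ∧ comZero m q ∧ Kfun 2 m ω q = 0 ∧ e = Eomega 2 m ω q} = {0} := by
      ext e
      simp only [Set.mem_setOf_eq, Set.mem_singleton_iff]
      constructor
      · rintro ⟨q, hod, hcom, hK, rfl⟩
        rw [Eomega_of_K hK]
        norm_num
      · rintro rfl
        exact ⟨p0, hodp0, hcomp0, hKp0, by rw [Eomega_of_K hKp0]; norm_num⟩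
    rw [Estar, hset, csInf_singleton]
  · -- case 0 < α < 2
    intro hα hα2 hN3 c
    have hhalf : 0 < 1 - α / 2 := by linarith
    set B : ℝ := (|c| + 1) / (1 - α / 2) with hBdef
    have hB : 0 < B := by positivity
    set Tt : ℝ := B ^ ((2 + α) / 2) * (α / ω ^ 2) ^ (α / 2) with hTtdef
    have hTt : 0 < Tt :=
      mul_pos (Real.rpow_pos_of_pos hB _) (Real.rpow_pos_of_pos (by positivity) _)
    have hune : (Finset.univ : Finset (Fin N)).Nonempty := ⟨⟨0, by omega⟩, Finset.mem_univ _⟩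
    set mlow : ℝ := Finset.univ.inf' hune m with hmlowdef
    have hmlow : 0 < mlow := (Finset.lt_inf'_iff hune).mpr fun i _ => hm i
    have hmlow_le : ∀ i, mlow ≤ m i := fun i => Finset.inf'_le m (Finset.mem_univ i)
    set i0 : Fin N := ⟨0, by omega⟩ with hi0
    set i1 : Fin N := ⟨1, by omega⟩ with hi1
    set i2 : Fin N := ⟨2, by omega⟩ with hi2
    set A : ℝ := m i0 * m i1 with hAdef
    have hA : 0 < A := mul_pos (hm i0) (hm i1)
    set L : ℝ := mlow ^ (α / 2) with hLdef
    have hL : 0 < L := Real.rpow_pos_of_pos hmlow _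
    set C' : ℝ := A * L / Tt with hC'def
    have hC' : 0 < C' := by positivity
    set ε : ℝ := min (1 / 2) (C' ^ (α⁻¹) / 2) with hεdef
    have hCpow : 0 < C' ^ (α⁻¹) := Real.rpow_pos_of_pos hC' _
    have hε : 0 < ε := lt_min (by norm_num) (by positivity)
    have hε1 : ε < 1 := lt_of_le_of_lt (min_le_left _ _) (by norm_num)
    have hεα : ε ^ α < C' := by
      have hlt : ε < C' ^ (α⁻¹) :=
        lt_of_le_of_lt (min_le_right _ _) (by linarith)
      calc ε ^ α < (C' ^ (α⁻¹)) ^ α := Real.rpow_lt_rpow hε.le hlt hα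
        _ = C' := by
            rw [← Real.rpow_mul hC'.le, inv_mul_cancel₀ hα.ne', Real.rpow_one]
    set y : Fin N → ℝ := fun i => if i.val = 1 then ε else i.val with hydef
    have hyinj : Function.Injective y := by
      intro i j h
      simp only [hydef] at h
      by_cases hi : i.val = 1 <;> by_cases hj : j.val = 1
      · exact Fin.ext (by omega)
      · rw [if_pos hi, if_neg hj] at h
        have hj1 : (j.val : ℝ) < 1 := by rw [← h]; exact hε1
        have : j.val = 0 := by exact_mod_cast Nat.lt_one_iff.mp (by exact_mod_cast hj1)
        rw [this] at h
        norm_num at h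
        linarith
      · rw [if_neg hi, if_pos hj] at h
        have hi1' : (i.val : ℝ) < 1 := by rw [h]; exact hε1
        have : i.val = 0 := by exact_mod_cast Nat.lt_one_iff.mp (by exact_mod_cast hi1')
        rw [this] at h
        norm_num at h
        linarith
      · rw [if_neg hi, if_neg hj] at h
        exact Fin.ext (by exact_mod_cast h)
    obtain ⟨q, hod, hcom, hdist⟩ := line_config (m := m) hm (by omega) y hyinj
    have hy0 : y i0 = 0 := by simp [hydef, hi0]
    have hy1 : y i1 = ε := by simp [hydef, hi1]
    have hy2 : y i2 = 2 := by norm_num [hydef, hi2]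
    have hd01 : ‖q i0 - q i1‖ = ε := by
      rw [hdist i0 i1, hy0, hy1, zero_sub, abs_neg, abs_of_pos hε]
    have hd02 : ‖q i0 - q i2‖ = 2 := by
      rw [hdist i0 i2, hy0, hy2, zero_sub, abs_neg]
      norm_num
    have hne01 : i0 ≠ i1 := by simp [hi0, hi1, Fin.ext_iff]
    clear_value B Tt mlow i0 i1 i2 A L C' ε y
    have hnp : A / ε ^ α ≤ -pot α m q := by
      rw [hAdef]
      have := single_le_negpot' (α := α) (q := q) hm hne01
      rwa [hd01] at this
    have hIq : mlow ≤ inertia m q := by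
      have htri : (2 : ℝ) ≤ ‖q i0‖ + ‖q i2‖ := by
        rw [← hd02]; exact norm_sub_le _ _
      have : 1 ≤ ‖q i0‖ ∨ 1 ≤ ‖q i2‖ := by
        by_contra h
        push_neg at h
        linarith [h.1, h.2]
      rcases this with h | h
      · calc mlow = mlow * 1 := (mul_one _).symm
          _ ≤ m i0 * ‖q i0‖ ^ 2 := by
              apply mul_le_mul (hmlow_le i0) _ zero_le_one (hm i0).le
              nlinarith
          _ ≤ inertia m q := single_le_inertia hm i0
      · calc mlow = mlow * 1 := (mul_one _).symm
          _ ≤ m i2 * ‖q i2‖ ^ 2 := by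
              apply mul_le_mul (hmlow_le i2) _ zero_le_one (hm i2).le
              nlinarith
          _ ≤ inertia m q := single_le_inertia hm i2
    have hW : Tt < (-pot α m q) * (inertia m q) ^ (α / 2) := by
      have hεαpos : 0 < ε ^ α := Real.rpow_pos_of_pos hε _
      have hALne : A * L ≠ 0 := (mul_pos hA hL).ne'
      have hTeq : A * L / C' = Tt := by
        rw [hC'def, div_div_eq_mul_div, mul_comm (A * L) Tt, mul_div_assoc,
          div_self hALne, mul_one]
      have step1 : A * L / C' < A * L / ε ^ α :=
        div_lt_div_of_pos_left (mul_pos hA hL) hεαpos hεα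
      have step2 : A * L / ε ^ α ≤ (-pot α m q) * (inertia m q) ^ (α / 2) := by
        have hrL : L ≤ (inertia m q) ^ (α / 2) := by
          rw [hLdef]
          exact Real.rpow_le_rpow hmlow.le hIq (by linarith)
        calc A * L / ε ^ α = (A / ε ^ α) * L := by ring
          _ ≤ (-pot α m q) * (inertia m q) ^ (α / 2) :=
              mul_le_mul hnp hrL hL.le (negpot_nonneg hm)
      linarith [step1, step2, hTeq]
    obtain ⟨p, hodp, hcomp', hKp, hvp⟩ :=
      toConstraint hα hω hm (by omega) hod hcom
    have hup : 0 < -pot α m p := negpot_pos hm (by omega) hodp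
    have hpow : B ^ ((2 + α) / 2) < (-pot α m p) ^ ((2 + α) / 2) := by
      have hωα : (0:ℝ) < (ω ^ 2 / α) ^ (α / 2) := Real.rpow_pos_of_pos (by positivity) _
      have h1 : Tt * (ω ^ 2 / α) ^ (α / 2) <
          ((-pot α m q) * (inertia m q) ^ (α / 2)) * (ω ^ 2 / α) ^ (α / 2) :=
        mul_lt_mul_of_pos_right hW hωα
      have h2 : Tt * (ω ^ 2 / α) ^ (α / 2) = B ^ ((2 + α) / 2) := by
        rw [hTtdef, mul_assoc, ← Real.mul_rpow (by positivity) (by positivity),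
          show α / ω ^ 2 * (ω ^ 2 / α) = 1 by field_simp, Real.one_rpow, mul_one]
      rw [← hvp] at h1
      rw [← h2]
      exact h1
    have hBp : B < -pot α m p := by
      by_contra h
      push_neg at h
      have := Real.rpow_le_rpow hup.le h (by linarith : (0:ℝ) ≤ (2 + α) / 2)
      linarith
    refine ⟨p, hodp, hcomp', hKp, ?_⟩
    rw [Eomega_of_K hKp]
    have h1 : (1 - α / 2) * pot α m p < (1 - α / 2) * (-B) := by
      have : pot α m p < -B := by linarith
      exact mul_lt_mul_of_pos_left this hhalf
    have hne2 : (2 : ℝ) - α ≠ 0 := by linarith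
    have h2 : (1 - α / 2) * (-B) = -(|c| + 1) := by
      rw [hBdef]
      field_simp
    have h3 : -(|c| + 1) < c := by
      have := neg_abs_le c
      linarith
    linarith

end
end NBodyPaper
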